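/- Let c ≥ 7 and let F = Σ_{k ∈ ℤ/cℤ} x_k x_{k+1} x_{k+2}² in ℚ[x_i : i ∈ ℤ/cℤ]. The ℚ-vector space of symmetric matrices a = (a_{ij})_{i,j ∈ ℤ/cℤ} with rational entries satisfying Σ_{i,j} a_{ij} ∂_i ∂_j F = 0 has dimension exactly c(c−3)/2. (Equivalently, the space of quadratic forms annihilating F has dimension c(c−3)/2, so the degree-2 component of I_F = Ann(F) has dimension c(c−3)/2 and h₂(S/I_F) = 2c.) -/
import Mathlib

set_option linter.unusedSectionVars false
set_option maxHeartbeats 1600000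

open MvPolynomial

/-- The space of symmetric matrices `a = (a_{ij})` over `ℚ` with
`Σ_{i,j} a_{ij} ∂_i ∂_j F = 0`, as a `ℚ`-submodule of matrices. -/
noncomputable def symQuadricAnn (c : ℕ) [NeZero c] (F : MvPolynomial (ZMod c) ℚ) :
    Submodule ℚ (Matrix (ZMod c) (ZMod c) ℚ) where
  carrier := {a | a.IsSymm ∧
    ∑ i : ZMod c, ∑ j : ZMod c, a i j • pderiv i (pderiv j F) = 0}
  zero_mem' := by
    refine ⟨Matrix.isSymm_zero, ?_⟩
    simp
  add_mem' := by
    rintro a b ⟨ha1, ha2⟩ ⟨hb1, hb2⟩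
    refine ⟨ha1.add hb1, ?_⟩
    simp only [Matrix.add_apply, add_smul, Finset.sum_add_distrib]
    rw [ha2, hb2, add_zero]
  smul_mem' := by
    rintro r a ⟨ha1, ha2⟩
    refine ⟨ha1.smul r, ?_⟩
    simp only [Matrix.smul_apply, smul_eq_mul, mul_smul, ← Finset.smul_sum]
    rw [ha2, smul_zero]

namespace SymQuadricAux

open Finsupp

section aux
variable {c : ℕ} [NeZero c]

lemma my_num_ne_zero {d : ℕ} (h1 : 0 < d) (h2 : d < c) : ((d : ℕ) : ZMod c) ≠ 0 := by
  intro h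
  rw [ZMod.natCast_eq_zero_iff] at h
  exact absurd (Nat.le_of_dvd h1 h) (by omega)

lemma my_sub_ne (hc : 7 ≤ c) {x y : ZMod c} {d : ℕ} (hd1 : 0 < d) (hd2 : d ≤ 6)
    (h : x - y = ((d : ℕ) : ZMod c)) : x ≠ y := by
  intro he
  rw [he, sub_self] at h
  exact my_num_ne_zero hd1 (show d < c by omega) h.symm

end aux

/-- The spanning family: `inl a ↦ x_a x_{a+1}`, `inr a ↦ x_a² + 2 x_{a-3} x_{a-1}`,
in monomial form. -/
noncomputable def Gpoly (c : ℕ) [NeZero c] : ZMod c ⊕ ZMod c → MvPolynomial (ZMod c) ℚ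
  | .inl a => monomial (single a 1 + single (a+1) 1) (1:ℚ)
  | .inr a => monomial (single a 2) (1:ℚ) + monomial (single (a-3) 1 + single (a-1) 1) (2:ℚ)

section main
variable {c : ℕ} [NeZero c] (hc : 7 ≤ c)

lemma Gpoly_inl_def (a : ZMod c) :
    Gpoly c (.inl a) = monomial (single a 1 + single (a+1) 1) (1:ℚ) := rfl

lemma Gpoly_inr_def (a : ZMod c) :
    Gpoly c (.inr a) =
      monomial (single a 2) (1:ℚ) + monomial (single (a-3) 1 + single (a-1) 1) (2:ℚ) := rfl

lemma X_mul_X_eq (a b : ZMod c) :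
    (X a * X b : MvPolynomial (ZMod c) ℚ) = monomial (single a 1 + single b 1) 1 := by
  rw [show (X a : MvPolynomial (ZMod c) ℚ) = X a ^ 1 by ring,
    show (X b : MvPolynomial (ZMod c) ℚ) = X b ^ 1 by ring,
    X_pow_eq_monomial, X_pow_eq_monomial, monomial_mul, one_mul]

lemma Gpoly_inl (a : ZMod c) : Gpoly c (.inl a) = X a * X (a+1) := by
  rw [Gpoly_inl_def, X_mul_X_eq]

lemma Gpoly_inr (a : ZMod c) :
    Gpoly c (.inr a) = X a ^ 2 + 2 * (X (a-3) * X (a-1)) := by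
  rw [Gpoly_inr_def, X_mul_X_eq, X_pow_eq_monomial]
  congr 1
  rw [show (2 : MvPolynomial (ZMod c) ℚ) = C ((2:ℕ):ℚ) by rw [C_eq_coe_nat]; norm_num,
    C_mul_monomial, mul_one]
  norm_num

lemma two_smul_poly (p : MvPolynomial (ZMod c) ℚ) : (2:ℚ) • p = 2 * p := by
  rw [smul_eq_C_mul, show C (2:ℚ) = (2 : MvPolynomial (ZMod c) ℚ) by
    rw [show ((2:ℚ)) = ((2:ℕ):ℚ) by norm_num, C_eq_coe_nat]; norm_num]

include hc

lemma pair_ne_sq {x y a : ZMod c} (h : x ≠ y) :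
    single x 1 + single y 1 ≠ single a 2 := by
  intro h'
  have hx := DFunLike.congr_fun h' x
  simp only [Finsupp.add_apply, Finsupp.single_apply, eq_self_iff_true, if_true] at hx
  rw [if_neg (fun hh : y = x => h hh.symm)] at hx
  split_ifs at hx <;> · omega

lemma pair_eq_pair {b a : ZMod c}
    (h' : single b 1 + single (b+1) 1 = (single a 1 + single (a+1) 1 : ZMod c →₀ ℕ)) :
    b = a := by
  have p1 : ∀ z : ZMod c, z + 1 ≠ z := fun z =>
    my_sub_ne hc one_pos (by norm_num) (by push_cast; ring)
  have p2 : ∀ z : ZMod c, z + 2 ≠ z := fun z =>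
    my_sub_ne hc two_pos (by norm_num) (by push_cast; ring)
  by_contra hba
  have ha := DFunLike.congr_fun h' a
  have hb := DFunLike.congr_fun h' b
  simp only [Finsupp.add_apply, Finsupp.single_apply, eq_self_iff_true, if_true] at ha hb
  rw [if_neg hba, if_neg (p1 a)] at ha
  rw [if_neg (fun hh : a = b => hba hh.symm), if_neg (p1 b)] at hb
  have h1 : b + 1 = a := by by_contra hh; rw [if_neg hh] at ha; omega
  have h2 : a + 1 = b := by by_contra hh; rw [if_neg hh] at hb; omega
  exact p2 a (by linear_combination h1 + h2)

lemma lin_indep : LinearIndependent ℚ (Gpoly c) := by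
  have p1 : ∀ z : ZMod c, z + 1 ≠ z := fun z =>
    my_sub_ne hc one_pos (by norm_num) (by push_cast; ring)
  have h3 : ∀ b : ZMod c, b - 3 ≠ b - 1 :=
    fun b => (my_sub_ne hc two_pos (by norm_num) (by push_cast; ring)).symm
  rw [Fintype.linearIndependent_iff]
  intro g hg
  rw [Fintype.sum_sum_type] at hg
  have hβ : ∀ a : ZMod c, g (.inr a) = 0 := by
    intro a
    have hco := congrArg (coeff (single a 2)) hg
    rw [coeff_add, coeff_zero] at hco
    have cA : coeff (single a 2) (∑ b : ZMod c, g (.inl b) • Gpoly c (.inl b)) = 0 := by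
      rw [coeff_sum]
      apply Finset.sum_eq_zero
      intro b _
      rw [coeff_smul, Gpoly_inl_def, coeff_monomial, if_neg (pair_ne_sq hc (p1 b).symm),
        smul_zero]
    have cB : coeff (single a 2) (∑ b : ZMod c, g (.inr b) • Gpoly c (.inr b)) = g (.inr a) := by
      rw [coeff_sum, Finset.sum_eq_single a]
      · rw [coeff_smul, Gpoly_inr_def, coeff_add, coeff_monomial, if_pos rfl, coeff_monomial,
          if_neg (pair_ne_sq hc (h3 a)), add_zero, smul_eq_mul, mul_one]
      · intro b _ hb
        rw [coeff_smul, Gpoly_inr_def, coeff_add, coeff_monomial,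
          if_neg (fun h => hb ((Finsupp.single_left_inj (by norm_num)).mp h)),
          coeff_monomial, if_neg (pair_ne_sq hc (h3 b)), add_zero, smul_zero]
      · intro h; exact absurd (Finset.mem_univ a) h
    rw [cA, cB, zero_add] at hco
    exact hco
  have hg' : ∑ b : ZMod c, g (.inl b) • Gpoly c (.inl b) = 0 := by
    rw [← hg]
    have : ∑ b : ZMod c, g (.inr b) • Gpoly c (.inr b) = 0 :=
      Finset.sum_eq_zero fun b _ => by rw [hβ b, zero_smul]
    rw [this, add_zero]
  have hα : ∀ a : ZMod c, g (.inl a) = 0 := by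
    intro a
    have hco := congrArg (coeff (single a 1 + single (a+1) 1)) hg'
    rw [coeff_zero, coeff_sum, Finset.sum_eq_single a] at hco
    · rw [coeff_smul, Gpoly_inl_def, coeff_monomial, if_pos rfl, smul_eq_mul, mul_one] at hco
      exact hco
    · intro b _ hb
      rw [coeff_smul, Gpoly_inl_def, coeff_monomial,
        if_neg (fun h => hb (pair_eq_pair hc h)), smul_zero]
    · intro h; exact absurd (Finset.mem_univ a) h
  intro t
  cases t with
  | inl a => exact hα a
  | inr a => exact hβ a

lemma pd1 (i : ZMod c) :
    pderiv i (∑ k : ZMod c, (X k * X (k+1) * X (k+2)^2 : MvPolynomial (ZMod c) ℚ)) =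
      X (i+1) * X (i+2)^2 + X (i-1) * X (i+1)^2 + 2 * (X (i-2) * (X (i-1) * X i)) := by
  have e1 : i - 1 ≠ i - 2 := my_sub_ne hc one_pos (by norm_num) (by push_cast; ring)
  have e2 : i ≠ i - 2 := my_sub_ne hc two_pos (by norm_num) (by push_cast; ring)
  have e3 : i ≠ i - 1 := my_sub_ne hc one_pos (by norm_num) (by push_cast; ring)
  rw [map_sum]
  rw [← Finset.sum_subset (Finset.subset_univ ({i-2, i-1, i} : Finset (ZMod c)))
    (fun k _ hk => ?_)]
  · rw [Finset.sum_insert (by simp [e1.symm, e2.symm]), Finset.sum_insert (by simp [e3.symm]),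
      Finset.sum_singleton]
    have d1 : pderiv i (X (i-2) * X (i-2+1) * X (i-2+2)^2 : MvPolynomial (ZMod c) ℚ)
        = 2 * (X (i-2) * (X (i-1) * X i)) := by
      have h1 : (i : ZMod c) - 2 + 1 = i - 1 := by ring
      have h2 : (i : ZMod c) - 2 + 2 = i := by ring
      rw [h1, h2]
      simp [pderiv_mul, pderiv_pow, pderiv_X_of_ne e2.symm, pderiv_X_of_ne e3.symm]
      ring
    have d2 : pderiv i (X (i-1) * X (i-1+1) * X (i-1+2)^2 : MvPolynomial (ZMod c) ℚ)
        = X (i-1) * X (i+1)^2 := by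
      have h1 : (i : ZMod c) - 1 + 1 = i := by ring
      have h2 : (i : ZMod c) - 1 + 2 = i + 1 := by ring
      have e4 : i + 1 ≠ i := my_sub_ne hc one_pos (by norm_num) (by push_cast; ring)
      rw [h1, h2]
      simp [pderiv_mul, pderiv_pow, pderiv_X_of_ne e3.symm, pderiv_X_of_ne e4]
      ring
    have d3 : pderiv i (X i * X (i+1) * X (i+2)^2 : MvPolynomial (ZMod c) ℚ)
        = X (i+1) * X (i+2)^2 := by
      have e4 : i + 1 ≠ i := my_sub_ne hc one_pos (by norm_num) (by push_cast; ring)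
      have e5 : i + 2 ≠ i := my_sub_ne hc two_pos (by norm_num) (by push_cast; ring)
      simp [pderiv_mul, pderiv_pow, pderiv_X_of_ne e4, pderiv_X_of_ne e5]
      ring
    rw [d1, d2, d3]
    ring
  · simp only [Finset.mem_insert, Finset.mem_singleton, not_or] at hk
    obtain ⟨k1, k2, k3⟩ := hk
    have n1 : k ≠ i := k3
    have n2 : k + 1 ≠ i := fun h => k2 (by rw [← h]; ring)
    have n3 : k + 2 ≠ i := fun h => k1 (by rw [← h]; ring)
    simp [pderiv_mul, pderiv_pow, pderiv_X_of_ne n1, pderiv_X_of_ne n2, pderiv_X_of_ne n3]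

lemma pd2 (i j : ZMod c) :
    pderiv j (pderiv i (∑ k : ZMod c, (X k * X (k+1) * X (k+2)^2 : MvPolynomial (ZMod c) ℚ))) =
      if j = i then 2 * (X (i-2) * X (i-1))
      else if j = i+1 then X (i+2)^2 + 2 * (X (i-1) * X (i+1))
      else if j = i-1 then X (i+1)^2 + 2 * (X (i-2) * X i)
      else if j = i+2 then 2 * (X (i+1) * X (i+2))
      else if j = i-2 then 2 * (X (i-1) * X i)
      else 0 := by
  have S : ∀ (x y : ZMod c) (d : ℕ), 0 < d → d ≤ 6 → x - y = ((d : ℕ) : ZMod c) → x ≠ y :=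
    fun x y d h1 h2 h3 => my_sub_ne hc h1 h2 h3
  have p1 : i + 1 ≠ i := S _ _ 1 (by norm_num) (by norm_num) (by push_cast; ring)
  have p2 : i + 2 ≠ i := S _ _ 2 (by norm_num) (by norm_num) (by push_cast; ring)
  have m1 : i - 1 ≠ i := (S _ _ 1 (by norm_num) (by norm_num) (by push_cast; ring)).symm
  have m2 : i - 2 ≠ i := (S _ _ 2 (by norm_num) (by norm_num) (by push_cast; ring)).symm
  have p1p2 : i + 1 ≠ i + 2 := (S _ _ 1 (by norm_num) (by norm_num) (by push_cast; ring)).symm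
  have p1m1 : i + 1 ≠ i - 1 := S _ _ 2 (by norm_num) (by norm_num) (by push_cast; ring)
  have p1m2 : i + 1 ≠ i - 2 := S _ _ 3 (by norm_num) (by norm_num) (by push_cast; ring)
  have p2m1 : i + 2 ≠ i - 1 := S _ _ 3 (by norm_num) (by norm_num) (by push_cast; ring)
  have p2m2 : i + 2 ≠ i - 2 := S _ _ 4 (by norm_num) (by norm_num) (by push_cast; ring)
  have m1m2 : i - 1 ≠ i - 2 := S _ _ 1 (by norm_num) (by norm_num) (by push_cast; ring)
  have two0 : ∀ m : ZMod c, pderiv m (2 : MvPolynomial (ZMod c) ℚ) = 0 := by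
    intro m
    rw [show (2 : MvPolynomial (ZMod c) ℚ) = 1 + 1 by norm_num, map_add, pderiv_one, add_zero]
  rw [pd1 hc]
  by_cases h0 : j = i
  · rw [if_pos h0, h0]
    simp [pderiv_mul, pderiv_pow, two0, Pi.single_apply, p1, p2, m1, m2, p1p2, p1m1, p1m2, p2m1, p2m2, m1m2, p1.symm, p2.symm, m1.symm, m2.symm, p1p2.symm, p1m1.symm, p1m2.symm, p2m1.symm, p2m2.symm, m1m2.symm]
  rw [if_neg h0]
  by_cases h1 : j = i + 1
  · rw [if_pos h1, h1]
    simp [pderiv_mul, pderiv_pow, two0, Pi.single_apply, p1, p2, m1, m2, p1p2, p1m1, p1m2, p2m1, p2m2, m1m2, p1.symm, p2.symm, m1.symm, m2.symm, p1p2.symm, p1m1.symm, p1m2.symm, p2m1.symm, p2m2.symm, m1m2.symm]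
    ring
  rw [if_neg h1]
  by_cases h2 : j = i - 1
  · rw [if_pos h2, h2]
    simp [pderiv_mul, pderiv_pow, two0, Pi.single_apply, p1, p2, m1, m2, p1p2, p1m1, p1m2, p2m1, p2m2, m1m2, p1.symm, p2.symm, m1.symm, m2.symm, p1p2.symm, p1m1.symm, p1m2.symm, p2m1.symm, p2m2.symm, m1m2.symm]
  rw [if_neg h2]
  by_cases h3 : j = i + 2
  · rw [if_pos h3, h3]
    simp [pderiv_mul, pderiv_pow, two0, Pi.single_apply, p1, p2, m1, m2, p1p2, p1m1, p1m2, p2m1, p2m2, m1m2, p1.symm, p2.symm, m1.symm, m2.symm, p1p2.symm, p1m1.symm, p1m2.symm, p2m1.symm, p2m2.symm, m1m2.symm]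
    ring
  rw [if_neg h3]
  by_cases h4 : j = i - 2
  · rw [if_pos h4, h4]
    simp [pderiv_mul, pderiv_pow, two0, Pi.single_apply, p1, p2, m1, m2, p1p2, p1m1, p1m2, p2m1, p2m2, m1m2, p1.symm, p2.symm, m1.symm, m2.symm, p1p2.symm, p1m1.symm, p1m2.symm, p2m1.symm, p2m2.symm, m1m2.symm]
  rw [if_neg h4]
  have q0 : i ≠ j := fun h => h0 h.symm
  have q1 : i + 1 ≠ j := fun h => h1 h.symm
  have q2 : i - 1 ≠ j := fun h => h2 h.symm
  have q3 : i + 2 ≠ j := fun h => h3 h.symm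
  have q4 : i - 2 ≠ j := fun h => h4 h.symm
  simp [pderiv_mul, pderiv_pow, two0, Pi.single_apply, q0, q1, q2, q3, q4]

lemma pd2_mem (i j : ZMod c) :
    pderiv i (pderiv j (∑ k : ZMod c, (X k * X (k+1) * X (k+2)^2 : MvPolynomial (ZMod c) ℚ)))
      ∈ Submodule.span ℚ (Set.range (Gpoly c)) := by
  have hmem : ∀ t, Gpoly c t ∈ Submodule.span ℚ (Set.range (Gpoly c)) :=
    fun t => Submodule.subset_span ⟨t, rfl⟩
  rw [pd2 hc j i]
  split_ifs with h0 h1 h2 h3 h4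
  · rw [show (2 : MvPolynomial (ZMod c) ℚ) * (X (j-2) * X (j-1)) = (2:ℚ) • Gpoly c (.inl (j-2))
      by rw [Gpoly_inl, show (j:ZMod c)-2+1 = j-1 by ring, two_smul_poly]]
    exact Submodule.smul_mem _ _ (hmem _)
  · rw [show (X (j+2)^2 + 2 * (X (j-1) * X (j+1)) : MvPolynomial (ZMod c) ℚ)
        = Gpoly c (.inr (j+2))
      by rw [Gpoly_inr, show (j:ZMod c)+2-3 = j-1 by ring, show (j:ZMod c)+2-1 = j+1 by ring]]
    exact hmem _
  · rw [show (X (j+1)^2 + 2 * (X (j-2) * X j) : MvPolynomial (ZMod c) ℚ)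
        = Gpoly c (.inr (j+1))
      by rw [Gpoly_inr, show (j:ZMod c)+1-3 = j-2 by ring, show (j:ZMod c)+1-1 = j by ring]]
    exact hmem _
  · rw [show (2 : MvPolynomial (ZMod c) ℚ) * (X (j+1) * X (j+2)) = (2:ℚ) • Gpoly c (.inl (j+1))
      by rw [Gpoly_inl, show (j:ZMod c)+1+1 = j+2 by ring, two_smul_poly]]
    exact Submodule.smul_mem _ _ (hmem _)
  · rw [show (2 : MvPolynomial (ZMod c) ℚ) * (X (j-1) * X j) = (2:ℚ) • Gpoly c (.inl (j-1))
      by rw [Gpoly_inl, show (j:ZMod c)-1+1 = j by ring, two_smul_poly]]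
    exact Submodule.smul_mem _ _ (hmem _)
  · exact Submodule.zero_mem _

end main

section assembly
variable {c : ℕ} [NeZero c]

/-- symmetric matrices -/
def symSub (c : ℕ) [NeZero c] : Submodule ℚ (Matrix (ZMod c) (ZMod c) ℚ) where
  carrier := {a | a.IsSymm}
  zero_mem' := Matrix.isSymm_zero
  add_mem' := fun h1 h2 => h1.add h2
  smul_mem' := fun r _ h => h.smul r

noncomputable def symEquiv (c : ℕ) [NeZero c] : symSub c ≃ₗ[ℚ] (Sym2 (ZMod c) → ℚ) where
  toFun a := Sym2.lift ⟨fun i j => a.1 i j, fun i j => a.2.apply j i⟩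
  map_add' a b := funext fun p => Sym2.inductionOn p (fun i j => by simp)
  map_smul' r a := funext fun p => Sym2.inductionOn p (fun i j => by simp)
  invFun f := ⟨Matrix.of fun i j => f s(i,j), Matrix.IsSymm.ext fun i j => by
    simp [Sym2.eq_swap]⟩
  left_inv a := Subtype.ext (by ext i j; simp)
  right_inv f := funext fun p => Sym2.inductionOn p (fun i j => by simp)

lemma finrank_symSub : Module.finrank ℚ (symSub c) = (c + 1).choose 2 := by
  rw [(symEquiv c).finrank_eq, Module.finrank_fintype_fun_eq_card, Sym2.card, ZMod.card]

/-- the contraction linear map -/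
noncomputable def phiMap (c : ℕ) [NeZero c] (F : MvPolynomial (ZMod c) ℚ) :
    Matrix (ZMod c) (ZMod c) ℚ →ₗ[ℚ] MvPolynomial (ZMod c) ℚ where
  toFun a := ∑ i : ZMod c, ∑ j : ZMod c, a i j • pderiv i (pderiv j F)
  map_add' a b := by
    simp only [Matrix.add_apply, add_smul, Finset.sum_add_distrib]
  map_smul' r a := by
    simp only [Matrix.smul_apply, smul_eq_mul, mul_smul, ← Finset.smul_sum, RingHom.id_apply]

/-- symmetrized elementary matrix -/
def Esym (i j : ZMod c) : Matrix (ZMod c) (ZMod c) ℚ :=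
  Matrix.of fun i' j' =>
    (if i = i' ∧ j = j' then (1:ℚ) else 0) + (if j = i' ∧ i = j' then (1:ℚ) else 0)

lemma Esym_isSymm (i j : ZMod c) : (Esym i j).IsSymm := by
  apply Matrix.IsSymm.ext
  intro i' j'
  simp only [Esym, Matrix.of_apply]
  rw [add_comm]
  congr 1 <;> simp [and_comm]

lemma sum_sum_ite (p : ZMod c → ZMod c → MvPolynomial (ZMod c) ℚ) (i j : ZMod c) :
    ∑ i' : ZMod c, ∑ j' : ZMod c, (if i = i' ∧ j = j' then (1:ℚ) else 0) • p i' j' = p i j := by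
  simp [ite_and, ite_smul, Finset.sum_ite_eq]

lemma phi_Esym (F : MvPolynomial (ZMod c) ℚ) (i j : ZMod c) :
    phiMap c F (Esym i j) = pderiv i (pderiv j F) + pderiv j (pderiv i F) := by
  simp only [phiMap, LinearMap.coe_mk, AddHom.coe_mk, Esym, Matrix.of_apply, add_smul,
    Finset.sum_add_distrib]
  rw [sum_sum_ite, sum_sum_ite]

end assembly

end SymQuadricAux

open SymQuadricAux

/-- Let `c ≥ 7` and `F = Σ_k x_k x_{k+1} x_{k+2}²` in `ℚ[x_i : i ∈ ℤ/cℤ]`.  The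
`ℚ`-vector space of symmetric matrices `a` with `Σ_{i,j} a_{ij} ∂_i ∂_j F = 0` has
dimension exactly `c(c−3)/2`; equivalently the space of quadrics annihilating `F`
has dimension `c(c−3)/2`, so `h₂(S/Ann F) = 2c`. -/
theorem symQuadricAnn_finrank (c : ℕ) (hc : 7 ≤ c) [NeZero c]
    (F : MvPolynomial (ZMod c) ℚ)
    (hF : F = ∑ k : ZMod c, X k * X (k + 1) * X (k + 2) ^ 2) :
    Module.finrank ℚ (symQuadricAnn c F) = c * (c - 3) / 2 := by
  classical
  subst hF
  set F : MvPolynomial (ZMod c) ℚ := ∑ k : ZMod c, X k * X (k + 1) * X (k + 2) ^ 2 with hFdef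
  set φ := phiMap c F with hφ
  set ψ := φ.domRestrict (symSub c) with hψ
  -- identify the annihilator with ker ψ
  have hann : symQuadricAnn c F = symSub c ⊓ LinearMap.ker φ := by
    ext a
    constructor
    · rintro ⟨h1, h2⟩
      exact ⟨h1, h2⟩
    · rintro ⟨h1, h2⟩
      exact ⟨h1, h2⟩
  have hker : LinearMap.ker ψ
      = Submodule.comap (symSub c).subtype (symSub c ⊓ LinearMap.ker φ) := by
    ext ⟨a, ha⟩
    simp only [LinearMap.mem_ker, Submodule.mem_comap, Submodule.mem_inf, Submodule.coe_subtype,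
      LinearMap.domRestrict_apply]
    exact ⟨fun h => ⟨ha, h⟩, fun h => h.2⟩
  have e1 : Module.finrank ℚ (symQuadricAnn c F) = Module.finrank ℚ (LinearMap.ker ψ) := by
    rw [hann, hker]
    exact (Submodule.comapSubtypeEquivOfLe inf_le_left).finrank_eq.symm
  -- the range of ψ
  have hrange : LinearMap.range ψ = Submodule.span ℚ (Set.range (Gpoly c)) := by
    apply le_antisymm
    · rintro x ⟨⟨a, ha⟩, rfl⟩
      refine Submodule.sum_mem _ fun i _ => Submodule.sum_mem _ fun j _ =>
        Submodule.smul_mem _ _ ?_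
      exact pd2_mem hc i j
    · rw [Submodule.span_le]
      rintro x ⟨t, rfl⟩
      have key : ∀ i j : ZMod c, pderiv i (pderiv j F) + pderiv j (pderiv i F)
          ∈ LinearMap.range ψ := fun i j =>
        ⟨⟨Esym i j, Esym_isSymm i j⟩, by rw [hψ, LinearMap.domRestrict_apply, phi_Esym]⟩
      cases t with
      | inl a =>
        show Gpoly c (.inl a) ∈ LinearMap.range ψ
        have h2 := pd2 hc (a+2) (a+2)
        rw [if_pos rfl] at h2
        rw [← hFdef] at h2
        have h4 : Gpoly c (.inl a)
            = (1/4 : ℚ) • (pderiv (a+2) (pderiv (a+2) F) + pderiv (a+2) (pderiv (a+2) F)) := by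
          rw [h2, Gpoly_inl, show (a:ZMod c)+2-2 = a by ring, show (a:ZMod c)+2-1 = a+1 by ring]
          have h6 : ((2:MvPolynomial (ZMod c) ℚ) * (X a * X (a+1))
              + 2 * (X a * X (a+1))) = (4:ℚ) • (X a * X (a+1)) := by
            rw [smul_eq_C_mul, map_ofNat]; ring
          rw [h6, smul_smul]
          norm_num
        rw [h4]
        exact Submodule.smul_mem _ _ (key _ _)
      | inr a =>
        show Gpoly c (.inr a) ∈ LinearMap.range ψ
        have n1 : (a:ZMod c) - 1 ≠ a - 2 := my_sub_ne hc one_pos (by norm_num) (by push_cast; ring)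
        have n2 : (a:ZMod c) - 2 ≠ a - 1 := n1.symm
        have n3 : (a:ZMod c) - 2 ≠ a - 1 + 1 := by
          rw [show (a:ZMod c) - 1 + 1 = a by ring]
          exact (my_sub_ne hc two_pos (by norm_num) (by push_cast; ring) :
            (a:ZMod c) ≠ a - 2).symm
        have h2 := pd2 hc (a-2) (a-1)
        rw [if_neg n1, if_pos (show (a:ZMod c)-1 = a-2+1 by ring)] at h2
        rw [← hFdef] at h2
        have h2' := pd2 hc (a-1) (a-2)
        rw [if_neg n2, if_neg n3, if_pos (show (a:ZMod c)-2 = a-1-1 by ring)] at h2'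
        rw [← hFdef] at h2'
        have hG1 : pderiv (a-1) (pderiv (a-2) F) = Gpoly c (.inr a) := by
          rw [h2, Gpoly_inr, show (a:ZMod c)-2+2 = a by ring,
            show (a:ZMod c)-2-1 = a-3 by ring, show (a:ZMod c)-2+1 = a-1 by ring]
        have hG2 : pderiv (a-2) (pderiv (a-1) F) = Gpoly c (.inr a) := by
          rw [h2', Gpoly_inr, show (a:ZMod c)-1+1 = a by ring,
            show (a:ZMod c)-1-2 = a-3 by ring]
        have h4 : Gpoly c (.inr a)
            = (1/2 : ℚ) • (pderiv (a-2) (pderiv (a-1) F) + pderiv (a-1) (pderiv (a-2) F)) := by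
          rw [hG1, hG2]
          have h6 : (Gpoly c (.inr a) + Gpoly c (.inr a)) = (2:ℚ) • Gpoly c (.inr a) := by
            rw [smul_eq_C_mul, map_ofNat]; ring
          rw [h6, smul_smul]
          norm_num
        rw [h4]
        exact Submodule.smul_mem _ _ (key _ _)
  -- dimension counts
  have hfin : FiniteDimensional ℚ (symSub c) := inferInstance
  have hrk := LinearMap.finrank_range_add_finrank_ker ψ
  have hr2 : Module.finrank ℚ (LinearMap.range ψ) = c + c := by
    rw [hrange, finrank_span_eq_card (lin_indep hc), Fintype.card_sum, ZMod.card]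
  rw [finrank_symSub, hr2] at hrk
  -- arithmetic
  have h3 : (3:ℕ) ≤ c := by omega
  have hA : (c+1).choose 2 = (c+1) * c / 2 := by
    rw [Nat.choose_two_right, Nat.add_sub_cancel]
  have hB : (c+1) * c = c * (c-3) + 4 * c := by
    have hcc : c - 3 + 4 = c + 1 := by omega
    calc (c+1) * c = c * ((c-3) + 4) := by rw [hcc]; ring
    _ = c * (c-3) + 4 * c := by ring
  have hEven : ∃ k, c * (c - 3) = 2 * k := by
    rcases Nat.even_or_odd c with h | h
    · obtain ⟨k, hk⟩ := h.mul_right (c - 3)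
      exact ⟨k, by omega⟩
    · have : Even (c - 3) := Nat.Odd.sub_odd h (by decide)
      obtain ⟨k, hk⟩ := this.mul_left c
      exact ⟨k, by omega⟩
  obtain ⟨k, hk⟩ := hEven
  rw [e1]
  rw [hA] at hrk
  generalize hGen : (c+1) * c = A at hB hrk
  generalize hGen2 : c * (c - 3) = B at hB hk ⊢
  omega
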